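/- For every permutation σ of [n], the number of upper-nestings of σ equals the number of lower-nestings of θ̂(σ), and the number of lower-nestings of σ equals the number of upper-nestings of θ̂(σ). -/

import Mathlib

namespace Paper

variable {n : ℕ}

/-- The 1-based position corresponding to `i : Fin n`. -/
def pv (i : Fin n) : ℕ := (i : ℕ) + 1

/-- The 1-based letter of the word `f` at 1-based position `k` (0 if out of range). -/
def valAt (f : Fin n → Fin n) (k : ℕ) : ℕ :=
  if h : 1 ≤ k ∧ k ≤ n then ((f ⟨k - 1, by omega⟩ : Fin n) : ℕ) + 1 else 0

/-- The map θ̂ : the 1-based `i`-th letter of `hatTheta f` is `σ̂_{n+1-i}`,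
where `σ̂ₐ = n - a` (1-based) if `a < n` and `n̂ = n`. (0-based encoding.) -/
def hatTheta (f : Fin n → Fin n) (i : Fin n) : Fin n :=
  if ((f i.rev : ℕ)) = n - 1 then f i.rev
  else ⟨n - 2 - (f i.rev : ℕ), by have := i.isLt; omega⟩

end Paper

namespace Paper

variable {n : ℕ}

/-- Ending-crossings: pairs (i,j) with i < j ≤ σᵢ < σⱼ = n (1-based). -/
def ecr (f : Fin n → Fin n) : ℕ :=
  (Finset.univ.filter (fun p : Fin n × Fin n =>
    pv p.1 < pv p.2 ∧ pv p.2 ≤ valAt f (pv p.1) ∧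
    valAt f (pv p.1) < valAt f (pv p.2) ∧ valAt f (pv p.2) = n)).card

/-- Upper-crossings: pairs (i,j) with i < j ≤ σᵢ < σⱼ < n (1-based). -/
def ucr (f : Fin n → Fin n) : ℕ :=
  (Finset.univ.filter (fun p : Fin n × Fin n =>
    pv p.1 < pv p.2 ∧ pv p.2 ≤ valAt f (pv p.1) ∧
    valAt f (pv p.1) < valAt f (pv p.2) ∧ valAt f (pv p.2) < n)).card

/-- Lower-crossings: pairs (i,j) with i > j > σᵢ > σⱼ (1-based). -/
def lcr (f : Fin n → Fin n) : ℕ :=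
  (Finset.univ.filter (fun p : Fin n × Fin n =>
    pv p.1 > pv p.2 ∧ pv p.2 > valAt f (pv p.1) ∧
    valAt f (pv p.1) > valAt f (pv p.2))).card

/-- Ending-nestings: pairs (i,j) with i < j ≤ σⱼ < σᵢ = n (1-based). -/
def ene (f : Fin n → Fin n) : ℕ :=
  (Finset.univ.filter (fun p : Fin n × Fin n =>
    pv p.1 < pv p.2 ∧ pv p.2 ≤ valAt f (pv p.2) ∧
    valAt f (pv p.2) < valAt f (pv p.1) ∧ valAt f (pv p.1) = n)).card

/-- Upper-nestings: pairs (i,j) with i < j ≤ σⱼ < σᵢ < n (1-based). -/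
def une (f : Fin n → Fin n) : ℕ :=
  (Finset.univ.filter (fun p : Fin n × Fin n =>
    pv p.1 < pv p.2 ∧ pv p.2 ≤ valAt f (pv p.2) ∧
    valAt f (pv p.2) < valAt f (pv p.1) ∧ valAt f (pv p.1) < n)).card

/-- Lower-nestings: pairs (i,j) with i > j > σⱼ > σᵢ (1-based). -/
def lne (f : Fin n → Fin n) : ℕ :=
  (Finset.univ.filter (fun p : Fin n × Fin n =>
    pv p.1 > pv p.2 ∧ pv p.2 > valAt f (pv p.2) ∧
    valAt f (pv p.2) > valAt f (pv p.1))).card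

/-- Variant ending-nestings: pairs (i,j) with σⱼ < j < i ≤ σᵢ = n (1-based). -/
def etne (f : Fin n → Fin n) : ℕ :=
  (Finset.univ.filter (fun p : Fin n × Fin n =>
    valAt f (pv p.2) < pv p.2 ∧ pv p.2 < pv p.1 ∧
    pv p.1 ≤ valAt f (pv p.1) ∧ valAt f (pv p.1) = n)).card

/-- The crossing number: #{(i,j) : i < j ≤ σᵢ < σⱼ} + #{(i,j) : i > j > σᵢ > σⱼ}. -/
def cros (f : Fin n → Fin n) : ℕ :=
  (Finset.univ.filter (fun p : Fin n × Fin n =>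
    pv p.1 < pv p.2 ∧ pv p.2 ≤ valAt f (pv p.1) ∧
    valAt f (pv p.1) < valAt f (pv p.2))).card
  + lcr f

/-- The nesting number: #{(i,j) : i < j ≤ σⱼ < σᵢ} + #{(i,j) : i > j > σⱼ > σᵢ}. -/
def nest (f : Fin n → Fin n) : ℕ :=
  (Finset.univ.filter (fun p : Fin n × Fin n =>
    pv p.1 < pv p.2 ∧ pv p.2 ≤ valAt f (pv p.2) ∧
    valAt f (pv p.2) < valAt f (pv p.1))).card
  + lne f

end Paper

namespace Paper

lemma valAt_pv (f : Fin n → Fin n) (i : Fin n) : valAt f (pv i) = (f i : ℕ) + 1 := by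
  have h := i.isLt
  rw [valAt, dif_pos ⟨by simp [pv], by simp [pv]⟩]
  simp [pv]

lemma hatTheta_val (f : Fin n → Fin n) (i : Fin n) :
    ((hatTheta f i : ℕ)) = if (f i.rev : ℕ) = n - 1 then (f i.rev : ℕ)
      else n - 2 - (f i.rev : ℕ) := by
  rw [hatTheta]; split <;> simp

/-- θ̂ exchanges upper-nestings and lower-nestings. -/
theorem une_lne_hatTheta (n : ℕ) (σ : Equiv.Perm (Fin n)) :
    une ⇑σ = lne (hatTheta ⇑σ) ∧ lne ⇑σ = une (hatTheta ⇑σ) := by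
  set f : Fin n → Fin n := ⇑σ with hf
  constructor
  · unfold une lne
    apply Finset.card_nbij' (fun p => (p.1.rev, p.2.rev)) (fun p => (p.1.rev, p.2.rev))
    · intro p hp
      simp only [Finset.mem_coe, Finset.mem_filter, Finset.mem_univ, true_and,
        valAt_pv, hatTheta_val, Fin.rev_rev] at hp ⊢
      simp only [pv, Fin.val_rev] at hp ⊢
      have h1 := p.1.isLt; have h2 := p.2.isLt
      have h3 := (f p.1).isLt; have h4 := (f p.2).isLt
      split_ifs <;> omega
    · intro p hp
      simp only [Finset.mem_coe, Finset.mem_filter, Finset.mem_univ, true_and,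
        valAt_pv, hatTheta_val, Fin.rev_rev] at hp ⊢
      simp only [pv, Fin.val_rev] at hp ⊢
      have h1 := p.1.isLt; have h2 := p.2.isLt
      have h3 := (f p.1.rev).isLt; have h4 := (f p.2.rev).isLt
      split_ifs at hp <;> omega
    · intro p _; simp
    · intro p _; simp
  · unfold une lne
    apply Finset.card_nbij' (fun p => (p.1.rev, p.2.rev)) (fun p => (p.1.rev, p.2.rev))
    · intro p hp
      simp only [Finset.mem_coe, Finset.mem_filter, Finset.mem_univ, true_and,
        valAt_pv, hatTheta_val, Fin.rev_rev] at hp ⊢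
      simp only [pv, Fin.val_rev] at hp ⊢
      have h1 := p.1.isLt; have h2 := p.2.isLt
      have h3 := (f p.1).isLt; have h4 := (f p.2).isLt
      split_ifs <;> omega
    · intro p hp
      simp only [Finset.mem_coe, Finset.mem_filter, Finset.mem_univ, true_and,
        valAt_pv, hatTheta_val, Fin.rev_rev] at hp ⊢
      simp only [pv, Fin.val_rev] at hp ⊢
      have h1 := p.1.isLt; have h2 := p.2.isLt
      have h3 := (f p.1.rev).isLt; have h4 := (f p.2.rev).isLt
      split_ifs at hp <;> omega
    · intro p _; simp
    · intro p _; simp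

end Paper
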